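/- arXiv:0811.3880 — 3 statements merged into one kernel-verified Lean document; each statement's English description precedes it below -/
import Mathlib

section
/- For any element w of a finite Weyl group W acting on a Euclidean space V, the sum over W of det(id - w) equals |W|. -/
local notation "⟪" x ", " y "⟫_ℝ" => @inner ℝ _ _ x y

noncomputable section

variable {V : Type*} [NormedAddCommGroup V] [InnerProductSpace ℝ V] [FiniteDimensional ℝ V]

/-- `w` is an orthogonal reflection in a linear hyperplane. -/
def IsHyperplaneReflection (w : V ≃ₗᵢ[ℝ] V) : Prop :=
  ∃ v : V, v ≠ 0 ∧ w = Submodule.reflection (ℝ ∙ v)ᗮ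

/-!
Expanding `det (1 - w)` multilinearly in a basis writes `∑ w, det (1 - w)` as an alternating sum,
over the subsets `S` of the basis, of `W`-averages of alternating `|S|`-forms evaluated at basis
vectors. A `W`-invariant alternating form of positive degree vanishes: if one argument is a root
`v`, the reflection in `v` negates that argument and moves every other one by a multiple of `v`,
so it negates the value while leaving it fixed; as the roots span `V`, the form is zero. Only
`S = ∅` survives, and it contributes `|W|`.
-/

open Function Submodule

namespace AlternatingMap

variable {R M N ι : Type*} [CommRing R] [AddCommGroup M] [Module R M] [AddCommGroup N] [Module R N]

theorem map_eq_of_sub_mem_span_singleton [Fintype ι] [DecidableEq ι] (f : M [⋀^ι]→ₗ[R] N)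
    {y y' : ι → M} {i : ι} (hi : y' i = y i) (h : ∀ j, y' j - y j ∈ R ∙ y i) : f y' = f y := by
  suffices ∀ s : Finset ι, f (s.piecewise y' y) = f y by simpa using this Finset.univ
  intro s
  induction s using Finset.induction_on with
  | empty => simp
  | @insert j s hj ih =>
    obtain ⟨c, hc⟩ := mem_span_singleton.mp (h j)
    have hpj : s.piecewise y' y j = y j := s.piecewise_eq_of_notMem _ _ hj
    have hpi : s.piecewise y' y i = y i := by
      by_cases his : i ∈ s <;> simp [Finset.piecewise, his, hi]
    rw [Finset.piecewise_insert, ← sub_add_cancel (y' j) (y j), ← hc, add_comm,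
      f.map_update_add, ← hpj, update_eq_self, ih]
    rcases eq_or_ne j i with rfl | hji
    · rw [hc, hi, sub_self, f.map_update_zero, add_zero]
    · rw [f.map_update_smul, ← hpi, f.map_update_self _ hji, smul_zero, add_zero]

@[simp]
theorem sum_apply {α : Type*} (s : Finset α) (f : α → M [⋀^ι]→ₗ[R] N) (x : ι → M) :
    (∑ a ∈ s, f a) x = ∑ a ∈ s, f a x := by
  induction s using Finset.cons_induction <;> simp [*]

def domDomRestrict (f : M [⋀^ι]→ₗ[R] N) (P : ι → Prop) [DecidablePred P]
    (z : {a // ¬P a} → M) : M [⋀^{a // P a}]→ₗ[R] N :=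
  { f.toMultilinearMap.domDomRestrict P z with
    map_eq_zero_of_eq' := fun x i j hx hij =>
      f.map_eq_zero_of_eq _ (by simp [i.2, j.2, hx]) (Subtype.coe_ne_coe.mpr hij) }

@[simp]
theorem domDomRestrict_apply (f : M [⋀^ι]→ₗ[R] N) (P : ι → Prop) [DecidablePred P]
    (z : {a // ¬P a} → M) (x : {a // P a} → M) :
    f.domDomRestrict P z x = f fun j => if h : P j then x ⟨j, h⟩ else z ⟨j, h⟩ :=
  rfl

end AlternatingMap

theorem Submodule.reflection_orthogonal_sub_mem {𝕜 E : Type*} [RCLike 𝕜] [NormedAddCommGroup E]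
    [InnerProductSpace 𝕜 E] (K : Submodule 𝕜 E) [K.HasOrthogonalProjection] (x : E) :
    Kᗮ.reflection x - x ∈ K := by
  rw [reflection_orthogonal_apply, reflection_apply]
  convert K.smul_mem (-2 : 𝕜) (K.starProjection_apply_mem x) using 1
  module

section ReflectionInvariant

variable {𝕜 E N ι : Type*} [RCLike 𝕜] [NormedAddCommGroup E] [InnerProductSpace 𝕜 E]
  [AddCommGroup N] [Module 𝕜 N] [DecidableEq ι]

theorem AlternatingMap.map_eq_zero_of_reflection_invariant [Fintype ι] (f : E [⋀^ι]→ₗ[𝕜] N)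
    {v : E} (hf : ∀ x, f (reflection (𝕜 ∙ v)ᗮ ∘ x) = f x) {x : ι → E} {i : ι} (hx : x i = v) :
    f x = 0 := by
  subst hx
  set s := reflection (𝕜 ∙ x i)ᗮ
  -- `s` negates `x i` and moves every other argument by a multiple of `x i`, which `f` ignores.
  have hneg : f x = -f x := calc
    f x = f (s ∘ x) := (hf x).symm
    _ = f (update (s ∘ x) i (-x i)) := by
      rw [← reflection_orthogonalComplement_singleton_eq_neg (𝕜 := 𝕜)]
      exact congrArg f (update_eq_self i _).symm
    _ = -f (update (s ∘ x) i (x i)) := f.map_update_neg _ _ _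
    _ = -f x := by
      refine congrArg _ (f.map_eq_of_sub_mem_span_singleton (update_self ..) fun j => ?_)
      rcases eq_or_ne j i with rfl | hji
      · simp
      · simpa [update_of_ne hji] using (𝕜 ∙ x i).reflection_orthogonal_sub_mem (x j)
  have h2 : (2 : 𝕜) • f x = 0 := by rw [two_smul]; nth_rw 1 [hneg]; exact neg_add_cancel _
  simpa using h2

theorem AlternatingMap.eq_zero_of_reflection_invariant [Fintype ι] [Nonempty ι]
    (f : E [⋀^ι]→ₗ[𝕜] N) {roots : Set E} (hspan : span 𝕜 roots = ⊤)
    (hf : ∀ v ∈ roots, ∀ x, f (reflection (𝕜 ∙ v)ᗮ ∘ x) = f x) : f = 0 := by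
  ext x
  obtain ⟨i⟩ := ‹Nonempty ι›
  have hslot : f.toMultilinearMap.toLinearMap x i = 0 :=
    LinearMap.ext_on hspan fun v hv =>
      f.map_eq_zero_of_reflection_invariant (hf v hv) (update_self i v x)
  simpa using LinearMap.congr_fun hslot (x i)

theorem AlternatingMap.sum_comp_eq_zero [Fintype ι] [Nonempty ι] (W : Subgroup (E ≃ₗᵢ[𝕜] E))
    [Fintype W] (hspan : span 𝕜 {v | reflection (𝕜 ∙ v)ᗮ ∈ W} = ⊤) (f : E [⋀^ι]→ₗ[𝕜] N)
    (x : ι → E) :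
    ∑ w : W, f ((w : E ≃ₗᵢ[𝕜] E) ∘ x) = 0 := by
  let g : E [⋀^ι]→ₗ[𝕜] N := ∑ w : W, f.compLinearMap (w : E ≃ₗᵢ[𝕜] E).toLinearEquiv.toLinearMap
  have hg : ∀ x, g x = ∑ w : W, f ((w : E ≃ₗᵢ[𝕜] E) ∘ x) := fun x => by simp [g]; rfl
  have hinv : ∀ v ∈ {v | reflection (𝕜 ∙ v)ᗮ ∈ W}, ∀ x, g (reflection (𝕜 ∙ v)ᗮ ∘ x) = g x :=
    fun v hv x => by
      rw [hg, hg]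
      exact Fintype.sum_equiv (Equiv.mulRight ⟨_, hv⟩) _ _ fun w => rfl
  rw [← hg, g.eq_zero_of_reflection_invariant hspan hinv, zero_apply]

theorem AlternatingMap.sum_comp_piecewise_eq_zero (W : Subgroup (E ≃ₗᵢ[𝕜] E)) [Fintype W]
    (hspan : span 𝕜 {v | reflection (𝕜 ∙ v)ᗮ ∈ W} = ⊤) (f : E [⋀^ι]→ₗ[𝕜] N)
    {s : Finset ι} (hs : s.Nonempty) (x z : ι → E) :
    ∑ w : W, f (s.piecewise ((w : E ≃ₗᵢ[𝕜] E) ∘ x) z) = 0 := by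
  have : Nonempty {j // j ∈ s} := hs.to_subtype
  convert (f.domDomRestrict (· ∈ s) fun j => z j).sum_comp_eq_zero W hspan fun j => x j with w
  rfl

end ReflectionInvariant

theorem LinearMap.det_one_sub_eq_sum {R M ι : Type*} [CommRing R] [AddCommGroup M] [Module R M]
    [Fintype ι] [DecidableEq ι] (b : Module.Basis ι R M) (g : M →ₗ[R] M) :
    LinearMap.det (1 - g) = ∑ s : Finset ι, (-1) ^ s.card * b.det (s.piecewise (g ∘ b) b) := by
  calc LinearMap.det (1 - g) = b.det (⇑(1 - g) ∘ b) := by rw [b.det_comp, b.det_self, mul_one]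
    _ = b.det ((fun i => (-1 : R) • g (b i)) + b) := by
      congr 1; ext i; simp [LinearMap.sub_apply, neg_add_eq_sub]
    _ = ∑ s : Finset ι, b.det (s.piecewise (fun i => (-1 : R) • g (b i)) b) :=
      b.det.map_add_univ _ _
    _ = _ := Finset.sum_congr rfl fun s _ => by
      have := b.det.toMultilinearMap.map_piecewise_smul (fun _ => -1) (s.piecewise (g ∘ b) b) s
      convert this using 2
      · exact congrArg b.det (by ext i; by_cases hi : i ∈ s <;> simp [hi])
      · simp

theorem span_reflection_roots_eq_top {W : Subgroup (V ≃ₗᵢ[ℝ] V)}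
    (hgen : W = Subgroup.closure { w : V ≃ₗᵢ[ℝ] V | w ∈ W ∧ IsHyperplaneReflection w })
    (hess : ∀ v : V, (∀ w ∈ W, w v = v) → v = 0) :
    span ℝ {v : V | reflection (ℝ ∙ v)ᗮ ∈ W} = ⊤ := by
  rw [← orthogonal_eq_bot_iff, eq_bot_iff]
  intro x hx
  have hfix : ∀ w ∈ Subgroup.closure {w | w ∈ W ∧ IsHyperplaneReflection w}, w x = x := by
    intro w hw
    induction hw using Subgroup.closure_induction with
    | mem s hs =>
      obtain ⟨hsW, v, -, rfl⟩ := hs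
      exact reflection_mem_subspace_eq_self
        (mem_orthogonal_singleton_iff_inner_right.mpr (hx v (subset_span hsW)))
    | one => rfl
    | mul a b _ _ ha hb => simp [ha, hb]
    | inv a _ ha => rw [LinearIsometryEquiv.coe_inv, LinearIsometryEquiv.symm_apply_eq, ha]
  exact hess x fun w hw => hfix w (hgen.le hw)

/-- If `W` is a finite Weyl group (more generally, any finite real
reflection group), presented as a group of orthogonal transformations of a Euclidean
space `V`, generated by its reflections and acting essentially (no nonzero fixed
vectors), then `∑_{w ∈ W} det(id - w) = |W|`. -/
theorem sum_det_id_sub_eq_card (W : Subgroup (V ≃ₗᵢ[ℝ] V)) [Fintype W]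
    (hgen : W = Subgroup.closure { w : V ≃ₗᵢ[ℝ] V | w ∈ W ∧ IsHyperplaneReflection w })
    (hess : ∀ v : V, (∀ w ∈ W, w v = v) → v = 0) :
    ∑ w : W, LinearMap.det
        ((1 : V →ₗ[ℝ] V) - (w : V ≃ₗᵢ[ℝ] V).toLinearEquiv.toLinearMap)
      = (Fintype.card W : ℝ) := by
  classical
  have hspan := span_reflection_roots_eq_top hgen hess
  let b := Module.finBasis ℝ V
  calc ∑ w : W, LinearMap.det ((1 : V →ₗ[ℝ] V) - (w : V ≃ₗᵢ[ℝ] V).toLinearEquiv.toLinearMap)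
      = ∑ s : Finset (Fin _), (-1) ^ s.card
          * ∑ w : W, b.det (s.piecewise ((w : V ≃ₗᵢ[ℝ] V) ∘ b) b) := by
        simp_rw [LinearMap.det_one_sub_eq_sum b, Finset.mul_sum]
        exact Finset.sum_comm
    _ = (Fintype.card W : ℝ) := by
        rw [Finset.sum_eq_single ∅ (fun s _ hs => by
          rw [b.det.sum_comp_piecewise_eq_zero W hspan (Finset.nonempty_iff_ne_empty.mpr hs),
            mul_zero]) (by simp)]
        simp [b.det_self]
end
end

section
/- Let w be an orthogonal transformation of V with ker(id - w) = 0, and let α ∈ V be nonzero with reflection s_α. Set n = (id - w^{-1})^{-1}(α). Then ⟨n, α^∨⟩ = 1, where α^∨ = 2α/⟨α,α⟩. -/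
local notation "⟪" x ", " y "⟫_ℝ" => @inner ℝ _ _ x y

noncomputable section

section

variable {E : Type*} [NormedAddCommGroup E] [InnerProductSpace ℝ E]

theorem two_mul_inner_eq_inner_self_of_norm_sub_eq {n α : E} (h : ‖n - α‖ = ‖n‖) :
    2 * ⟪n, α⟫_ℝ = ⟪α, α⟫_ℝ := by
  have hsq := norm_sub_sq_real n α
  rw [h, ← real_inner_self_eq_norm_sq α] at hsq
  linarith

theorem inner_smul_coroot_eq_one {n α : E} (hα : α ≠ 0) (h : 2 * ⟪n, α⟫_ℝ = ⟪α, α⟫_ℝ) :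
    ⟪n, (2 / ⟪α, α⟫_ℝ) • α⟫_ℝ = 1 := by
  have hαα : ⟪α, α⟫_ℝ ≠ 0 := inner_self_ne_zero.mpr hα
  rw [real_inner_smul_right, div_mul_eq_mul_div, h, div_self hαα]

end

variable {V : Type*} [NormedAddCommGroup V] [InnerProductSpace ℝ V] [FiniteDimensional ℝ V]

theorem inner_n_coroot_eq_one_general (w : V ≃ₗᵢ[ℝ] V)
    (α : V) (hα : α ≠ 0) (n : V) (hn : n - w.symm n = α) :
    ⟪n, (2 / ⟪α, α⟫_ℝ) • α⟫_ℝ = 1 := by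
  have hw_n : w.symm n = n - α := by rw [← hn, sub_sub_cancel]
  have h_norm : ‖n - α‖ = ‖n‖ := by rw [← hw_n, LinearIsometryEquiv.norm_map]
  exact inner_smul_coroot_eq_one hα (two_mul_inner_eq_inner_self_of_norm_sub_eq h_norm)

/-- Let `w` be an orthogonal transformation of `V` with
`ker(id - w) = 0`, let `α ≠ 0`, and let `n = (id - w⁻¹)⁻¹ α`, i.e. `n - w⁻¹ n = α`.
Then `⟪n, α^∨⟫ = 1` where `α^∨ = 2α/⟪α,α⟫`. -/
theorem inner_n_coroot_eq_one (w : V ≃ₗᵢ[ℝ] V)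
    (hw : LinearMap.ker ((1 : V →ₗ[ℝ] V) - w.toLinearEquiv.toLinearMap) = ⊥)
    (α : V) (hα : α ≠ 0) (n : V) (hn : n - w.symm n = α) :
    ⟪n, (2 / ⟪α, α⟫_ℝ) • α⟫_ℝ = 1 :=
  inner_n_coroot_eq_one_general w α hα n hn
end
end

section
/- Let w ∈ O(V) with id - w invertible, and for a vector α with ⟨α, x⟩ > 0 defining a half-space, the image (id - w)({x : ⟨α, x⟩ > 0}) equals {ξ : ⟨(id - w^{-1})^{-1} α, ξ⟩ > 0}. -/
local notation "⟪" x ", " y "⟫_ℝ" => @inner ℝ _ _ x y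

noncomputable section

variable {V : Type*} [NormedAddCommGroup V] [InnerProductSpace ℝ V] [FiniteDimensional ℝ V]

/-- Let `w` be an orthogonal transformation of `V` with `id - w`
invertible, `α ∈ V`, and `n = (id - w⁻¹)⁻¹ α` (i.e. `n - w⁻¹ n = α`).  Then the image
under `id - w` of the half space `{x | ⟪α, x⟫ > 0}` is `{ξ | ⟪n, ξ⟫ > 0}`. -/
theorem image_halfspace_id_sub (w : V ≃ₗᵢ[ℝ] V)
    (hw : LinearMap.ker ((1 : V →ₗ[ℝ] V) - w.toLinearEquiv.toLinearMap) = ⊥)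
    (α : V) (n : V) (hn : n - w.symm n = α) :
    (fun x => x - w x) '' { x : V | 0 < ⟪α, x⟫_ℝ } = { ξ : V | 0 < ⟪n, ξ⟫_ℝ } := by
  set f : V →ₗ[ℝ] V := (1 : V →ₗ[ℝ] V) - w.toLinearEquiv.toLinearMap with hf
  have hinj : Function.Injective f := LinearMap.ker_eq_bot.mp hw
  have hsurj : Function.Surjective f := (LinearMap.injective_iff_surjective).mp hinj
  have key : ∀ x : V, ⟪α, x⟫_ℝ = ⟪n, x - w x⟫_ℝ := by
    intro x
    rw [← hn, inner_sub_left, inner_sub_right]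
    congr 1
    rw [← w.inner_map_map (w.symm n) x, w.apply_symm_apply]
  ext ξ
  constructor
  · rintro ⟨x, hx, rfl⟩
    simpa [← key x] using hx
  · intro hξ
    obtain ⟨x, hx⟩ := hsurj ξ
    have hfx : x - w x = ξ := by simpa [hf, LinearMap.sub_apply] using hx
    exact ⟨x, by simpa [Set.mem_setOf_eq, key x, hfx] using hξ, hfx⟩
end
end
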